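/- Let n ∈ ℕ and let a₁,…,aₙ be positive integers, let n' ∈ {0,…,n}, and define xᵢ(b) = min(1, max(0, (b − Σ_{j=1}^{i−1} aⱼ)/aᵢ)) for i ≤ n' and xᵢ(b) = 0 for i > n'. Then for every i ∈ {1,…,n} and every integer b with 1 ≤ b ≤ Σ_{j=1}^n aⱼ, the function xᵢ restricted to the interval [b−1, b] is affine. Consequently, for any d ∈ ℝⁿ and δ ∈ ℝ, the function f(b) = dᵀx(b) − δb is affine on each such interval [b−1, b]. -/

import Mathlib

open Finset Set

def IsAffineOn (f : ℝ → ℝ) (s : Set ℝ) : Prop :=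
  ∃ α β : ℝ, ∀ t ∈ s, f t = α * t + β

namespace IsAffineOn

variable {f g : ℝ → ℝ} {s : Set ℝ}

lemma const (c : ℝ) (s : Set ℝ) : IsAffineOn (fun _ => c) s :=
  ⟨0, c, fun _ _ => by ring⟩

lemma id (s : Set ℝ) : IsAffineOn (fun t => t) s :=
  ⟨1, 0, fun _ _ => by ring⟩

lemma congr (hf : IsAffineOn f s) (h : EqOn f g s) : IsAffineOn g s := by
  obtain ⟨α, β, hαβ⟩ := hf
  exact ⟨α, β, fun t ht => (h ht).symm.trans (hαβ t ht)⟩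

lemma const_mul (hf : IsAffineOn f s) (c : ℝ) : IsAffineOn (fun t => c * f t) s := by
  obtain ⟨α, β, hαβ⟩ := hf
  exact ⟨c * α, c * β, fun t ht => by dsimp only; rw [hαβ t ht]; ring⟩

lemma add (hf : IsAffineOn f s) (hg : IsAffineOn g s) : IsAffineOn (fun t => f t + g t) s := by
  obtain ⟨α, β, hαβ⟩ := hf
  obtain ⟨γ, ε, hγε⟩ := hg
  exact ⟨α + γ, β + ε, fun t ht => by dsimp only; rw [hαβ t ht, hγε t ht]; ring⟩

lemma sub (hf : IsAffineOn f s) (hg : IsAffineOn g s) : IsAffineOn (fun t => f t - g t) s := by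
  simpa only [sub_eq_add_neg, neg_one_mul] using hf.add (hg.const_mul (-1))

lemma sum {ι : Type*} (u : Finset ι) {F : ι → ℝ → ℝ} (h : ∀ i ∈ u, IsAffineOn (F i) s) :
    IsAffineOn (fun t => ∑ i ∈ u, F i t) s := by
  induction u using Finset.cons_induction with
  | empty => simpa only [sum_empty] using const 0 s
  | cons i u hi ih =>
    simp only [sum_cons]
    exact (h i (mem_cons_self i u)).add (ih fun j hj => h j (mem_cons_of_mem hj))

end IsAffineOn

/-- The breakpoints `S` and `S + A` of the clamp are integers, so no interval `[b - 1, b]`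
with `b ∈ ℤ` has one of them in its interior. -/
lemma isAffineOn_clamp_Icc_intCast (S A b : ℤ) (hA : 0 < A) :
    IsAffineOn (fun t => min 1 (max 0 ((t - S) / A))) (Icc ((b : ℝ) - 1) b) := by
  have hA' : (0 : ℝ) < A := by exact_mod_cast hA
  rcases (by omega : b ≤ S ∨ S + A ≤ b - 1 ∨ (S ≤ b - 1 ∧ b ≤ S + A)) with h | h | ⟨h₁, h₂⟩
  · have h : (b : ℝ) ≤ S := by exact_mod_cast h
    refine (IsAffineOn.const 0 _).congr fun t ht => ?_
    have : (t - S) / A ≤ 0 := div_nonpos_of_nonpos_of_nonneg (by linarith [ht.2]) hA'.le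
    simp only [max_eq_left this, min_eq_right zero_le_one]
  · have h : (S : ℝ) + A ≤ b - 1 := by exact_mod_cast h
    refine (IsAffineOn.const 1 _).congr fun t ht => ?_
    have : 1 ≤ (t - S) / A := (one_le_div hA').2 (by linarith [ht.1])
    simp only [min_eq_left (this.trans (le_max_right _ _))]
  · have h₁ : (S : ℝ) ≤ b - 1 := by exact_mod_cast h₁
    have h₂ : (b : ℝ) ≤ S + A := by exact_mod_cast h₂
    refine ⟨1 / A, -S / A, fun t ht => ?_⟩
    have hnonneg : 0 ≤ (t - S) / A := div_nonneg (by linarith [ht.1]) hA'.le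
    have hle : (t - S) / A ≤ 1 := (div_le_one hA').2 (by linarith [ht.2])
    dsimp only
    rw [max_eq_right hnonneg, min_eq_right hle]
    ring

theorem stmt_3_general (n : ℕ) (a : Fin n → ℕ) (ha : ∀ i, 0 < a i)
    (n' : ℕ)
    (x : ℝ → Fin n → ℝ)
    (hx : ∀ (b : ℝ) (i : Fin n), x b i =
      if (i : ℕ) < n' then
        min 1 (max 0
          ((b - ∑ j ∈ Finset.univ.filter (fun j : Fin n => (j : ℕ) < (i : ℕ)), (a j : ℝ)) /
            (a i : ℝ)))
      else 0) :
    (∀ i : Fin n, ∀ b : ℕ, 1 ≤ b → b ≤ ∑ j, a j →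
      ∃ α β : ℝ, ∀ t ∈ Set.Icc ((b : ℝ) - 1) (b : ℝ), x t i = α * t + β) ∧
    ∀ (d : Fin n → ℝ) (δ : ℝ), ∀ b : ℕ, 1 ≤ b → b ≤ ∑ j, a j →
      ∃ α β : ℝ, ∀ t ∈ Set.Icc ((b : ℝ) - 1) (b : ℝ),
        (∑ i, d i * x t i) - δ * t = α * t + β := by
  have hxi : ∀ (i : Fin n) (b : ℕ), IsAffineOn (fun t => x t i) (Icc ((b : ℝ) - 1) b) := by
    intro i b
    by_cases hi : (i : ℕ) < n'
    · have := isAffineOn_clamp_Icc_intCast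
        (∑ j ∈ univ.filter (fun j : Fin n => (j : ℕ) < (i : ℕ)), (a j : ℤ)) (a i) b
        (by exact_mod_cast ha i)
      simpa only [hx, if_pos hi, Int.cast_sum, Int.cast_natCast] using this
    · exact (IsAffineOn.const 0 _).congr fun t _ => by simp only [hx, if_neg hi]
  refine ⟨fun i b _ _ => hxi i b, fun d δ b _ _ => ?_⟩
  exact (IsAffineOn.sum univ fun i _ => (hxi i b).const_mul (d i)).sub
    ((IsAffineOn.id _).const_mul δ)

/-- With integer item sizes, each component `xᵢ` of the follower's optimal solution
is affine on every interval `[b−1, b]` with integral endpoints `1 ≤ b ≤ Σ aⱼ`, and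
consequently the leader's objective `f(b) = dᵀx(b) − δb` is affine on each such
interval as well. -/
theorem stmt_3 (n : ℕ) (a : Fin n → ℕ) (ha : ∀ i, 0 < a i)
    (n' : ℕ) (hn' : n' ≤ n)
    (x : ℝ → Fin n → ℝ)
    (hx : ∀ (b : ℝ) (i : Fin n), x b i =
      if (i : ℕ) < n' then
        min 1 (max 0
          ((b - ∑ j ∈ Finset.univ.filter (fun j : Fin n => (j : ℕ) < (i : ℕ)), (a j : ℝ)) /
            (a i : ℝ)))
      else 0) :
    (∀ i : Fin n, ∀ b : ℕ, 1 ≤ b → b ≤ ∑ j, a j →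
      ∃ α β : ℝ, ∀ t ∈ Set.Icc ((b : ℝ) - 1) (b : ℝ), x t i = α * t + β) ∧
    ∀ (d : Fin n → ℝ) (δ : ℝ), ∀ b : ℕ, 1 ≤ b → b ≤ ∑ j, a j →
      ∃ α β : ℝ, ∀ t ∈ Set.Icc ((b : ℝ) - 1) (b : ℝ),
        (∑ i, d i * x t i) - δ * t = α * t + β :=
  stmt_3_general n a ha n' x hx
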